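/- A complete configuration enumeration procedure that prunes all non-canonical T-trees remains complete up to isomorphism: every isomorphism class of T-trees has at least one (canonical) member reachable via canonical unit extensions from the root-only T-tree. -/

import Mathlib

/-- A T-tree: a node labeled by a type (ℕ), with children grouped into
    T-lists (one list per component type, in type order). -/
inductive TTree : Type where
  | node : ℕ → List (List TTree) → TTree

namespace TTree

/-- The root type (label) of a T-tree. -/
def label : TTree → ℕ
  | .node a _ => a

/-- The list of T-lists of a T-tree. -/
def tlists : TTree → List (List TTree)
  | .node _ ls => ls

/-- A T-tree is a leaf iff all its T-lists are empty. -/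
def isLeaf : TTree → Bool
  | .node _ ls => ls.all List.isEmpty

mutual
  /-- Comparison of T-trees: root types first, then the sequences of T-lists
      lexicographically by the T-list order ≪. -/
  def cmpT : TTree → TTree → Ordering
    | .node a ls, .node b ls' => (compare a b).then (cmpOuter ls ls')
  /-- Lexicographic comparison of sequences of T-lists by ≪
      (≪ compares T-lists by length first, then lexicographically by ⋞). -/
  def cmpOuter : List (List TTree) → List (List TTree) → Ordering
    | [], [] => .eq
    | [], _ :: _ => .lt
    | _ :: _, [] => .gt
    | l :: ls, l' :: ls' =>
        (((compare l.length l'.length).then (cmpInner l l')).then (cmpOuter ls ls'))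
  /-- Lexicographic comparison of equal-length T-lists by ⋞. -/
  def cmpInner : List TTree → List TTree → Ordering
    | [], [] => .eq
    | [], _ :: _ => .lt
    | _ :: _, [] => .gt
    | a :: as, b :: bs => (cmpT a b).then (cmpInner as bs)
end

/-- The order ⋞ on T-trees. -/
def le (C C' : TTree) : Prop := cmpT C C' ≠ .gt

/-- The order ≪ on T-lists: length first, then lexicographically by ⋞. -/
def lle (L L' : List TTree) : Prop :=
  ((compare L.length L'.length).then (cmpInner L L')) ≠ .gt

/-- Canonicity of a T-tree: every T-list sorted non-decreasingly by ⋞,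
    every subtree canonical. -/
inductive Canonical : TTree → Prop where
  | mk (a : ℕ) (ls : List (List TTree))
      (hsorted : ∀ L ∈ ls, L.Chain' le)
      (hrec : ∀ L ∈ ls, ∀ c ∈ L, Canonical c) :
      Canonical (.node a ls)

end TTree

namespace TTree

mutual
  /-- Isomorphism of T-trees: same root type, and the T-lists are pairwise
      related by permutation up to isomorphism, recursively. -/
  inductive Iso : TTree → TTree → Prop where
    | mk (a : ℕ) (ls ls' : List (List TTree)) :
        IsoOuter ls ls' → Iso (.node a ls) (.node a ls')
  /-- Pointwise relation between the sequences of T-lists. -/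
  inductive IsoOuter : List (List TTree) → List (List TTree) → Prop where
    | nil : IsoOuter [] []
    | cons {L L' : List TTree} {ls ls' : List (List TTree)} :
        IsoList L L' → IsoOuter ls ls' → IsoOuter (L :: ls) (L' :: ls')
  /-- Permutation of a T-list up to isomorphism of its members. -/
  inductive IsoList : List TTree → List TTree → Prop where
    | nil : IsoList [] []
    | cons {a b : TTree} {l₁ l₂ : List TTree} :
        Iso a b → IsoList l₁ l₂ → IsoList (a :: l₁) (b :: l₂)
    | swap (a b : TTree) (l : List TTree) : IsoList (a :: b :: l) (b :: a :: l)
    | trans {l₁ l₂ l₃ : List TTree} :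
        IsoList l₁ l₂ → IsoList l₂ l₃ → IsoList l₁ l₃
end

end TTree

namespace TTree

mutual
  /-- `Ext C C'` holds iff `C'` is a unit extension of `C`, i.e. `C'` results
      from adding a single terminal node to `C`. -/
  inductive Ext : TTree → TTree → Prop where
    | mk (a : ℕ) (ls ls' : List (List TTree)) :
        ExtOuter ls ls' → Ext (.node a ls) (.node a ls')
  /-- The added node lies in exactly one of the T-lists. -/
  inductive ExtOuter : List (List TTree) → List (List TTree) → Prop where
    | here {L L' : List TTree} (ls : List (List TTree)) :
        ExtList L L' → ExtOuter (L :: ls) (L' :: ls)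
    | there {ls ls' : List (List TTree)} (L : List TTree) :
        ExtOuter ls ls' → ExtOuter (L :: ls) (L :: ls')
  /-- Either a new terminal node is inserted in the T-list, or one of its
      trees receives the new terminal node. -/
  inductive ExtList : List TTree → List TTree → Prop where
    | insert (c : TTree) (l₁ l₂ : List TTree) :
        c.isLeaf = true → ExtList (l₁ ++ l₂) (l₁ ++ c :: l₂)
    | deeper {c c' : TTree} (l₁ l₂ : List TTree) :
        Ext c c' → ExtList (l₁ ++ c :: l₂) (l₁ ++ c' :: l₂)
end

/-- The root-only T-tree associated with `C`: same root type, all T-lists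
    emptied. -/
def rootOnly : TTree → TTree
  | .node a ls => .node a (ls.map fun _ => [])

/-- A step in the state graph restricted to canonical T-trees: a unit
    extension whose result is canonical. -/
def canonStep (C C' : TTree) : Prop := Ext C C' ∧ Canonical C'

end TTree

namespace TTree

mutual
  def sizeT : TTree → ℕ
    | .node _ ls => 1 + sizeOuter ls
  def sizeOuter : List (List TTree) → ℕ
    | [] => 0
    | l :: ls => sizeInner l + sizeOuter ls
  def sizeInner : List TTree → ℕ
    | [] => 0
    | c :: cs => sizeT c + sizeInner cs
end

theorem sizeT_pos (c : TTree) : 1 ≤ sizeT c := by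
  cases c with | node a ls => rw [sizeT]; omega

theorem sizeInner_append (l₁ l₂ : List TTree) :
    sizeInner (l₁ ++ l₂) = sizeInner l₁ + sizeInner l₂ := by
  induction l₁ with
  | nil => simp [sizeInner]
  | cons c cs ih => simp [sizeInner, ih]; omega

mutual
  theorem cmpT_refl : ∀ c : TTree, cmpT c c = .eq
    | .node a ls => by
        rw [cmpT, cmpOuter_refl ls, Nat.compare_eq_eq.mpr rfl]; rfl
  theorem cmpOuter_refl : ∀ ls : List (List TTree), cmpOuter ls ls = .eq
    | [] => rfl
    | l :: ls => by
        rw [cmpOuter, cmpInner_refl l, cmpOuter_refl ls, Nat.compare_eq_eq.mpr rfl]; rfl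
  theorem cmpInner_refl : ∀ l : List TTree, cmpInner l l = .eq
    | [] => rfl
    | c :: cs => by rw [cmpInner, cmpT_refl c, cmpInner_refl cs]; rfl
end

mutual
  theorem eq_of_cmpT : ∀ c d : TTree, cmpT c d = .eq → c = d
    | .node a ls, .node b ls' => fun h => by
        rw [cmpT, Ordering.then_eq_eq] at h
        obtain ⟨h1, h2⟩ := h
        rw [Nat.compare_eq_eq] at h1
        rw [h1, eq_of_cmpOuter _ _ h2]
  theorem eq_of_cmpOuter : ∀ ls ls' : List (List TTree), cmpOuter ls ls' = .eq → ls = ls'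
    | [], [] => fun _ => rfl
    | [], _ :: _ => by simp [cmpOuter]
    | _ :: _, [] => by simp [cmpOuter]
    | l :: ls, l' :: ls' => fun h => by
        rw [cmpOuter, Ordering.then_eq_eq, Ordering.then_eq_eq] at h
        obtain ⟨⟨_, h2⟩, h3⟩ := h
        rw [eq_of_cmpInner _ _ h2, eq_of_cmpOuter _ _ h3]
  theorem eq_of_cmpInner : ∀ l l' : List TTree, cmpInner l l' = .eq → l = l'
    | [], [] => fun _ => rfl
    | [], _ :: _ => by simp [cmpInner]
    | _ :: _, [] => by simp [cmpInner]
    | c :: cs, d :: ds => fun h => by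
        rw [cmpInner, Ordering.then_eq_eq] at h
        rw [eq_of_cmpT _ _ h.1, eq_of_cmpInner _ _ h.2]
end

end TTree
namespace TTree

theorem natCompare_swap (a b : ℕ) : (compare a b).swap = compare b a := by
  rcases lt_trichotomy a b with h | h | h
  · rw [Nat.compare_eq_lt.mpr h, Nat.compare_eq_gt.mpr h]; rfl
  · rw [Nat.compare_eq_eq.mpr h, Nat.compare_eq_eq.mpr h.symm]; rfl
  · rw [Nat.compare_eq_gt.mpr h, Nat.compare_eq_lt.mpr h]; rfl

mutual
  theorem cmpT_swap : ∀ c d : TTree, (cmpT c d).swap = cmpT d c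
    | .node a ls, .node b ls' => by
        rw [cmpT, cmpT, Ordering.swap_then, natCompare_swap, cmpOuter_swap]
  theorem cmpOuter_swap : ∀ ls ls' : List (List TTree), (cmpOuter ls ls').swap = cmpOuter ls' ls
    | [], [] => rfl
    | [], _ :: _ => rfl
    | _ :: _, [] => rfl
    | l :: ls, l' :: ls' => by
        rw [cmpOuter, cmpOuter, Ordering.swap_then, Ordering.swap_then,
          natCompare_swap, cmpInner_swap, cmpOuter_swap]
  theorem cmpInner_swap : ∀ l l' : List TTree, (cmpInner l l').swap = cmpInner l' l
    | [], [] => rfl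
    | [], _ :: _ => rfl
    | _ :: _, [] => rfl
    | c :: cs, d :: ds => by
        rw [cmpInner, cmpInner, Ordering.swap_then, cmpT_swap, cmpInner_swap]
end

mutual
  theorem cmpT_lt_trans : ∀ a b c : TTree, cmpT a b = .lt → cmpT b c = .lt → cmpT a c = .lt
    | .node x ls, .node y ms, .node z ns => fun h1 h2 => by
        rw [cmpT, Ordering.then_eq_lt] at h1 h2 ⊢
        rcases h1 with h1 | ⟨h1, h1'⟩
        · rcases h2 with h2 | ⟨h2, h2'⟩
          · rw [Nat.compare_eq_lt] at h1 h2
            exact Or.inl (Nat.compare_eq_lt.mpr (lt_trans h1 h2))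
          · rw [Nat.compare_eq_eq] at h2; subst h2; exact Or.inl h1
        · rw [Nat.compare_eq_eq] at h1; subst h1
          rcases h2 with h2 | ⟨h2, h2'⟩
          · exact Or.inl h2
          · exact Or.inr ⟨h2, cmpOuter_lt_trans _ _ _ h1' h2'⟩
  theorem cmpOuter_lt_trans : ∀ a b c : List (List TTree),
      cmpOuter a b = .lt → cmpOuter b c = .lt → cmpOuter a c = .lt
    | [], [], _ :: _, _, _ => by rw [cmpOuter]
    | [], _ :: _, _ :: _, _, _ => by rw [cmpOuter]
    | [], [], [], h, _ => h
    | [], _ :: _, [], _, h => by rw [cmpOuter] at h; exact absurd h (by decide)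
    | _ :: _, [], _, h, _ => by rw [cmpOuter] at h; exact absurd h (by decide)
    | _ :: _, _ :: _, [], _, h => by rw [cmpOuter] at h; exact absurd h (by decide)
    | l :: ls, m :: ms, n :: ns, h1, h2 => by
        rw [cmpOuter, Ordering.then_eq_lt, Ordering.then_eq_lt, Ordering.then_eq_eq] at h1 h2 ⊢
        rcases h1 with (h1 | ⟨h1, h1'⟩) | ⟨⟨h1, h1'⟩, h1''⟩
        · rcases h2 with (h2 | ⟨h2, h2'⟩) | ⟨⟨h2, h2'⟩, h2''⟩
          · rw [Nat.compare_eq_lt] at h1 h2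
            exact Or.inl (Or.inl (Nat.compare_eq_lt.mpr (lt_trans h1 h2)))
          · rw [Nat.compare_eq_eq] at h2; rw [h2] at h1; exact Or.inl (Or.inl h1)
          · have := eq_of_cmpInner _ _ h2'; subst this; exact Or.inl (Or.inl h1)
        · rw [Nat.compare_eq_eq] at h1
          rcases h2 with (h2 | ⟨h2, h2'⟩) | ⟨⟨h2, h2'⟩, h2''⟩
          · rw [h1]; exact Or.inl (Or.inl h2)
          · rw [Nat.compare_eq_eq] at h2
            exact Or.inl (Or.inr ⟨Nat.compare_eq_eq.mpr (h1.trans h2),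
              cmpInner_lt_trans _ _ _ h1' h2'⟩)
          · have := eq_of_cmpInner _ _ h2'; subst this
            exact Or.inl (Or.inr ⟨Nat.compare_eq_eq.mpr h1, h1'⟩)
        · have := eq_of_cmpInner _ _ h1'; subst this
          rcases h2 with (h2 | ⟨h2, h2'⟩) | ⟨⟨h2, h2'⟩, h2''⟩
          · exact Or.inl (Or.inl h2)
          · exact Or.inl (Or.inr ⟨h2, h2'⟩)
          · exact Or.inr ⟨⟨h2, h2'⟩, cmpOuter_lt_trans _ _ _ h1'' h2''⟩
  theorem cmpInner_lt_trans : ∀ a b c : List TTree,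
      cmpInner a b = .lt → cmpInner b c = .lt → cmpInner a c = .lt
    | [], [], _ :: _, _, _ => by rw [cmpInner]
    | [], _ :: _, _ :: _, _, _ => by rw [cmpInner]
    | [], [], [], h, _ => h
    | [], _ :: _, [], _, h => by rw [cmpInner] at h; exact absurd h (by decide)
    | _ :: _, [], _, h, _ => by rw [cmpInner] at h; exact absurd h (by decide)
    | _ :: _, _ :: _, [], _, h => by rw [cmpInner] at h; exact absurd h (by decide)
    | x :: xs, y :: ys, z :: zs, h1, h2 => by
        rw [cmpInner, Ordering.then_eq_lt] at h1 h2 ⊢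
        rcases h1 with h1 | ⟨h1, h1'⟩
        · rcases h2 with h2 | ⟨h2, h2'⟩
          · exact Or.inl (cmpT_lt_trans _ _ _ h1 h2)
          · have := eq_of_cmpT _ _ h2; subst this; exact Or.inl h1
        · have := eq_of_cmpT _ _ h1; subst this
          rcases h2 with h2 | ⟨h2, h2'⟩
          · exact Or.inl h2
          · exact Or.inr ⟨h2, cmpInner_lt_trans _ _ _ h1' h2'⟩
end

theorem le_refl' (c : TTree) : le c c := by rw [le, cmpT_refl]; decide

theorem le_trans' {a b c : TTree} (h1 : le a b) (h2 : le b c) : le a c := by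
  rw [le] at h1 h2 ⊢
  rcases ha : cmpT a b with _ | _ | _
  · rcases hb : cmpT b c with _ | _ | _
    · rw [cmpT_lt_trans _ _ _ ha hb]; decide
    · have := eq_of_cmpT _ _ hb; subst this; rw [ha]; decide
    · exact absurd hb h2
  · have := eq_of_cmpT _ _ ha; subst this; exact h2
  · exact absurd ha h1

theorem le_total' (a b : TTree) : le a b ∨ le b a := by
  rw [le, le, ← cmpT_swap a b]
  rcases cmpT a b with _ | _ | _ <;> simp [Ordering.swap]

instance : DecidableRel le := fun a b => by
  rw [le]; infer_instance

instance : IsTrans TTree le := ⟨fun _ _ _ => le_trans'⟩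
instance : IsTotal TTree le := ⟨le_total'⟩

end TTree
namespace TTree

theorem cmpInner_append_lt (l₁ : List TTree) {c c' : TTree} (l₂ l₂' : List TTree)
    (h : cmpT c c' = .lt) : cmpInner (l₁ ++ c :: l₂) (l₁ ++ c' :: l₂') = .lt := by
  induction l₁ with
  | nil => simp only [List.nil_append]; rw [cmpInner, h]; rfl
  | cons x xs ih => simp only [List.cons_append]; rw [cmpInner, cmpT_refl, ih]; rfl

theorem ext_lt_aux : ∀ n : ℕ, ∀ c d : TTree, Ext c d → sizeT d ≤ n → cmpT c d = .lt := by
  intro n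
  induction n with
  | zero => intro c d _ hsz; have := sizeT_pos d; omega
  | succ n IH =>
    intro c d h hsz
    cases d with
    | node a ls' =>
      cases h with
      | mk a ls ls' h' =>
        rw [cmpT, Nat.compare_eq_eq.mpr rfl]
        show cmpOuter ls ls' = .lt
        rw [sizeT] at hsz
        have houter : ∀ ls' ls : List (List TTree), ExtOuter ls ls' →
            sizeOuter ls' ≤ n → cmpOuter ls ls' = .lt := by
          intro ls'
          induction ls' with
          | nil => intro ls hext; cases hext
          | cons L' ls' ihls =>
            intro ls hext hsz'
            cases hext with
            | here ls0 hL =>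
              rename_i L
              rw [cmpOuter, cmpOuter_refl]
              have hlist : (compare L.length L'.length).then
                  (cmpInner L L') = .lt := by
                cases hL with
                | insert c l₁ l₂ hleaf =>
                  rw [Nat.compare_eq_lt.mpr (by simp)]; rfl
                | deeper l₁ l₂ hd =>
                  rename_i c c'
                  rw [Nat.compare_eq_eq.mpr (by simp)]
                  show cmpInner _ _ = .lt
                  refine cmpInner_append_lt l₁ l₂ l₂ (IH c c' hd ?_)
                  rw [sizeOuter, sizeInner_append, sizeInner] at hsz'
                  omega
              rw [hlist]; rfl
            | there L hext' =>
              rw [cmpOuter, cmpInner_refl, Nat.compare_eq_eq.mpr rfl]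
              show cmpOuter _ _ = .lt
              refine ihls _ hext' ?_
              rw [sizeOuter] at hsz'
              omega
        exact houter ls' ls h' (by omega)

theorem ext_lt {c d : TTree} (h : Ext c d) : cmpT c d = .lt :=
  ext_lt_aux (sizeT d) c d h (Nat.le_refl _)

theorem ext_le {c d : TTree} (h : Ext c d) : le c d := by
  rw [le, ext_lt h]; decide

theorem extOuter_map : ∀ ls' ls : List (List TTree), ExtOuter ls ls' →
    ls.map (fun _ => ([] : List TTree)) = ls'.map (fun _ => []) := by
  intro ls'
  induction ls' with
  | nil => intro ls h; cases h
  | cons L' ls' ih =>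
    intro ls h
    cases h with
    | here ls0 hL => rfl
    | there L hext => simp only [List.map_cons]; rw [ih _ hext]

theorem ext_rootOnly {c d : TTree} (h : Ext c d) : rootOnly c = rootOnly d := by
  cases h with
  | mk a ls ls' h' => rw [rootOnly, rootOnly, extOuter_map _ _ h']

end TTree
namespace TTree

mutual
  def canonT : TTree → TTree
    | .node a ls => .node a (canonOuter ls)
  def canonOuter : List (List TTree) → List (List TTree)
    | [] => []
    | l :: ls => List.insertionSort le (canonInner l) :: canonOuter ls
  def canonInner : List TTree → List TTree
    | [] => []
    | c :: cs => canonT c :: canonInner cs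
end

mutual
  theorem iso_refl : ∀ c : TTree, Iso c c
    | .node a ls => .mk a ls ls (isoOuter_refl ls)
  theorem isoOuter_refl : ∀ ls : List (List TTree), IsoOuter ls ls
    | [] => .nil
    | l :: ls => .cons (isoList_refl l) (isoOuter_refl ls)
  theorem isoList_refl : ∀ l : List TTree, IsoList l l
    | [] => .nil
    | c :: cs => .cons (iso_refl c) (isoList_refl cs)
end

theorem isoList_of_perm {l l' : List TTree} (h : l.Perm l') : IsoList l l' := by
  induction h with
  | nil => exact .nil
  | cons x _ ih => exact .cons (iso_refl x) ih
  | swap x y l => exact .swap y x l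
  | trans _ _ ih1 ih2 => exact .trans ih1 ih2

mutual
  theorem iso_canonT : ∀ c : TTree, Iso c (canonT c)
    | .node a ls => .mk a ls (canonOuter ls) (isoOuter_canon ls)
  theorem isoOuter_canon : ∀ ls : List (List TTree), IsoOuter ls (canonOuter ls)
    | [] => .nil
    | l :: ls => .cons
        (.trans (isoList_canon l) (isoList_of_perm (List.perm_insertionSort le (canonInner l)).symm))
        (isoOuter_canon ls)
  theorem isoList_canon : ∀ l : List TTree, IsoList l (canonInner l)
    | [] => .nil
    | c :: cs => .cons (iso_canonT c) (isoList_canon cs)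
end

mutual
  theorem canonical_canonT : ∀ c : TTree, Canonical (canonT c)
    | .node a ls => .mk a (canonOuter ls)
        (fun L hL => ((canonOuter_mem ls L hL).1))
        (fun L hL c hc => (canonOuter_mem ls L hL).2 c hc)
  theorem canonOuter_mem : ∀ (ls : List (List TTree)) (L : List TTree),
      L ∈ canonOuter ls → L.Chain' le ∧ ∀ c ∈ L, Canonical c
    | [], L => by intro h; rw [canonOuter] at h; cases h
    | l :: ls, L => by
        intro h
        rw [canonOuter] at h
        rcases List.mem_cons.mp h with h | h
        · subst h
          constructor
          · exact (List.pairwise_insertionSort le (canonInner l)).isChain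
          · intro c hc
            have : c ∈ canonInner l := (List.perm_insertionSort le (canonInner l)).mem_iff.mp hc
            exact canonInner_mem l c this
        · exact canonOuter_mem ls L h
  theorem canonInner_mem : ∀ (l : List TTree) (c : TTree), c ∈ canonInner l → Canonical c
    | c' :: cs, c => by
        intro h
        rw [canonInner] at h
        rcases List.mem_cons.mp h with h | h
        · subst h; exact canonical_canonT c'
        · exact canonInner_mem cs c h
    | [], c => by intro h; rw [canonInner] at h; cases h
end

end TTree
namespace TTree

theorem all_nil_iff_map (ls : List (List TTree)) :
    (∀ L ∈ ls, L = []) ↔ ls.map (fun _ => ([] : List TTree)) = ls := by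
  induction ls with
  | nil => simp
  | cons L ls ih => simp only [List.map_cons, List.mem_cons, List.cons.injEq]
                    constructor
                    · intro h; exact ⟨(h L (Or.inl rfl)).symm, ih.mp (fun M hM => h M (Or.inr hM))⟩
                    · rintro ⟨h1, h2⟩ M hM
                      rcases hM with hM | hM
                      · rw [hM, ← h1]
                      · exact ih.mpr h2 M hM

theorem isLeaf_iff (b : ℕ) (ms : List (List TTree)) :
    isLeaf (.node b ms) = true ↔ ∀ L ∈ ms, L = [] := by
  simp [isLeaf, List.all_eq_true, List.isEmpty_iff]

theorem not_leaf_ne_rootOnly {c : TTree} (h : ¬ c.isLeaf = true) : c ≠ rootOnly c := by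
  cases c with
  | node b ms =>
    intro heq
    rw [rootOnly] at heq
    have h2 : ms.map (fun _ => ([] : List TTree)) = ms := by
      have := (TTree.node.injEq b ms b _).mp heq
      exact this.2.symm
    exact h ((isLeaf_iff b ms).mpr ((all_nil_iff_map ms).mpr h2))

theorem removeAux : ∀ n : ℕ, ∀ C : TTree, sizeT C ≤ n → Canonical C → C ≠ rootOnly C →
    ∃ D, Canonical D ∧ Ext D C ∧ sizeT D < sizeT C := by
  intro n
  induction n with
  | zero => intro C h _ _; have := sizeT_pos C; omega
  | succ n IH =>
    intro C hsz hcan hne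
    cases hcan with
    | mk a ls hsorted hrec =>
      have hne' : ¬ ∀ L ∈ ls, L = [] := by
        intro hall
        apply hne
        rw [rootOnly]
        rw [(all_nil_iff_map ls).mp hall]
      have houter : ∀ ls : List (List TTree), sizeOuter ls ≤ n →
          (∀ L ∈ ls, L.Chain' le) → (∀ L ∈ ls, ∀ c ∈ L, Canonical c) →
          (¬ ∀ L ∈ ls, L = []) →
          ∃ ls', ExtOuter ls' ls ∧ (∀ L ∈ ls', L.Chain' le) ∧
            (∀ L ∈ ls', ∀ c ∈ L, Canonical c) ∧ sizeOuter ls' < sizeOuter ls := by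
        intro ls
        induction ls with
        | nil => intro _ _ _ hne''; exact absurd (by simp) hne''
        | cons L ls ih =>
          intro hsz' hs hr hne''
          cases L with
          | nil =>
            have hne3 : ¬ ∀ L ∈ ls, L = [] := by
              intro hall
              apply hne''
              intro M hM
              rcases List.mem_cons.mp hM with hM | hM
              · exact hM
              · exact hall M hM
            obtain ⟨ls', h1, h2, h3, h4⟩ := ih
              (by rw [sizeOuter] at hsz'; omega)
              (fun M hM => hs M (List.mem_cons_of_mem _ hM))
              (fun M hM => hr M (List.mem_cons_of_mem _ hM)) hne3
            refine ⟨[] :: ls', .there [] h1, ?_, ?_, ?_⟩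
            · intro M hM
              rcases List.mem_cons.mp hM with hM | hM
              · rw [hM]; exact List.isChain_nil
              · exact h2 M hM
            · intro M hM c hc
              rcases List.mem_cons.mp hM with hM | hM
              · rw [hM] at hc; cases hc
              · exact h3 M hM c hc
            · rw [sizeOuter, sizeOuter, sizeInner]; omega
          | cons c rest =>
            have hmem : (c :: rest) ∈ (c :: rest) :: ls := List.mem_cons_self
            by_cases hleaf : c.isLeaf = true
            · refine ⟨rest :: ls, ?_, ?_, ?_, ?_⟩
              · have hE : ExtList ([] ++ rest) ([] ++ c :: rest) := .insert c [] rest hleaf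
                simpa using ExtOuter.here ls hE
              · intro M hM
                rcases List.mem_cons.mp hM with hM | hM
                · rw [hM]; exact (hs _ hmem).tail
                · exact hs M (List.mem_cons_of_mem _ hM)
              · intro M hM d hd
                rcases List.mem_cons.mp hM with hM | hM
                · rw [hM] at hd
                  exact hr _ hmem d (List.mem_cons_of_mem _ hd)
                · exact hr M (List.mem_cons_of_mem _ hM) d hd
              · rw [sizeOuter, sizeOuter, sizeInner]
                have := sizeT_pos c; omega
            · have hcne : c ≠ rootOnly c := not_leaf_ne_rootOnly hleaf
              have hszc : sizeT c ≤ n := by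
                rw [sizeOuter, sizeInner] at hsz'; omega
              obtain ⟨d, hdcan, hdext, hdsz⟩ := IH c hszc
                (hr _ hmem c (List.mem_cons_self)) hcne
              refine ⟨(d :: rest) :: ls, ?_, ?_, ?_, ?_⟩
              · have hE : ExtList ([] ++ d :: rest) ([] ++ c :: rest) :=
                  .deeper [] rest hdext
                simpa using ExtOuter.here ls hE
              · intro M hM
                rcases List.mem_cons.mp hM with hM | hM
                · rw [hM]
                  refine List.isChain_cons.mpr ⟨?_, (hs _ hmem).tail⟩
                  intro y hy
                  exact le_trans' (ext_le hdext)
                    ((List.isChain_cons.mp (hs _ hmem)).1 y hy)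
                · exact hs M (List.mem_cons_of_mem _ hM)
              · intro M hM e he
                rcases List.mem_cons.mp hM with hM | hM
                · rw [hM] at he
                  rcases List.mem_cons.mp he with he | he
                  · rw [he]; exact hdcan
                  · exact hr _ hmem e (List.mem_cons_of_mem _ he)
                · exact hr M (List.mem_cons_of_mem _ hM) e he
              · rw [sizeOuter, sizeOuter, sizeInner, sizeInner]; omega
      obtain ⟨ls', h1, h2, h3, h4⟩ := houter ls (by rw [sizeT] at hsz; omega)
        hsorted hrec hne'
      refine ⟨.node a ls', .mk a ls' h2 h3, .mk a ls' ls h1, ?_⟩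
      rw [sizeT, sizeT]; omega

theorem reachAux : ∀ n : ℕ, ∀ C : TTree, sizeT C ≤ n → Canonical C →
    Relation.ReflTransGen canonStep (rootOnly C) C := by
  intro n
  induction n with
  | zero => intro C h _; have := sizeT_pos C; omega
  | succ n IH =>
    intro C hsz hcan
    by_cases h : C = rootOnly C
    · rw [← h]
    · obtain ⟨D, hDcan, hDext, hDsz⟩ := removeAux (n + 1) C hsz hcan h
      have hr := IH D (by omega) hDcan
      rw [ext_rootOnly hDext] at hr
      exact hr.tail ⟨hDext, hcan⟩

end TTree


/-- An enumeration procedure pruning all non-canonical T-trees remains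
    complete up to isomorphism: every isomorphism class of T-trees has a
    canonical member reachable via canonical unit extensions from the
    root-only T-tree. -/
theorem pruning_complete :
    ∀ C : TTree, ∃ C' : TTree, TTree.Iso C C' ∧ TTree.Canonical C' ∧
      Relation.ReflTransGen TTree.canonStep (TTree.rootOnly C') C' := by
  intro C
  exact ⟨TTree.canonT C, TTree.iso_canonT C, TTree.canonical_canonT C,
    TTree.reachAux (TTree.sizeT (TTree.canonT C)) _ le_rfl (TTree.canonical_canonT C)⟩
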